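/- Let Ω ⊂ ℝⁿ be a bounded domain, 0 < α ≤ β < ∞, and let A ∈ M(α,β;Ω) depend only on the first coordinate: A = A(x₁) (so in particular A₁₁(x₁) ≥ α > 0 a.e.). Define the matrix fields M and P by: M₁₁ = 1/A₁₁, M₁ⱼ = 0 for j ≥ 2, M_{i1} = −A_{i1}/A₁₁ and M_{ij} = δ_{ij} for i, j ≥ 2; P₁₁ = 1, P_{1j} = A_{1j}/A₁₁ for j ≥ 2, P_{i1} = 0 and P_{ij} = A_{ij} − A_{i1}A_{1j}/A₁₁ for i, j ≥ 2. Then M has entries in L^∞(Ω), M is invertible a.e., M A = P, curl M = 0, and div P = 0 (as distributions on Ω). -/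

import Mathlib

open MeasureTheory Filter Topology

noncomputable section

/-- A smooth compactly supported test function with support contained in `Ω`. -/
def IsTestFun {n : ℕ} (Ω : Set (Fin n → ℝ)) (φ : (Fin n → ℝ) → ℝ) : Prop :=
  ContDiff ℝ (⊤ : ℕ∞) φ ∧ HasCompactSupport φ ∧ tsupport φ ⊆ Ω

/-- The `j`-th partial derivative of a function on `ℝⁿ`. -/
def pd {n : ℕ} (j : Fin n) (φ : (Fin n → ℝ) → ℝ) (x : Fin n → ℝ) : ℝ :=
  fderiv ℝ φ x (Pi.single j 1)

/-- Weak convergence in `L²(Ω)` of a sequence of scalar functions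
(the parameter `ε`, running through a sequence tending to `0`, is indexed by `ℕ`). -/
def WeakL2 {n : ℕ} (Ω : Set (Fin n → ℝ)) (F : ℕ → (Fin n → ℝ) → ℝ)
    (f : (Fin n → ℝ) → ℝ) : Prop :=
  (∀ k, MemLp (F k) 2 (volume.restrict Ω)) ∧ MemLp f 2 (volume.restrict Ω) ∧
    ∀ g : (Fin n → ℝ) → ℝ, MemLp g 2 (volume.restrict Ω) →
      Tendsto (fun k => ∫ x in Ω, F k x * g x) atTop (𝓝 (∫ x in Ω, f x * g x))

/-- Weak convergence in `L²(Ω)ⁿ` (componentwise). -/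
def WeakL2Vec {n : ℕ} (Ω : Set (Fin n → ℝ)) (F : ℕ → (Fin n → ℝ) → (Fin n → ℝ))
    (f : (Fin n → ℝ) → (Fin n → ℝ)) : Prop :=
  ∀ i, WeakL2 Ω (fun k x => F k x i) (fun x => f x i)

/-- Weak convergence in `L²(Ω)^{n×n}` (entrywise). -/
def WeakL2Mat {n : ℕ} (Ω : Set (Fin n → ℝ))
    (F : ℕ → (Fin n → ℝ) → Matrix (Fin n) (Fin n) ℝ)
    (f : (Fin n → ℝ) → Matrix (Fin n) (Fin n) ℝ) : Prop :=
  ∀ i j, WeakL2 Ω (fun k x => F k x i j) (fun x => f x i j)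

/-- A raw distribution on `Ω`: a functional acting on test functions. -/
abbrev RawDistrib (n : ℕ) := ((Fin n → ℝ) → ℝ) → ℝ

/-- The divergence of an `L²` vector field, as a distribution on `Ω`:
`⟨div D, φ⟩ = -∫ Σ_j D_j ∂_j φ`. -/
def divD {n : ℕ} (Ω : Set (Fin n → ℝ)) (D : (Fin n → ℝ) → (Fin n → ℝ)) : RawDistrib n :=
  fun φ => -∫ x in Ω, ∑ j, D x j * pd j φ x

/-- The `(i,j)` component of the curl of a vector field, as a distribution on `Ω`:
`⟨(curl E)_{ij}, φ⟩ = -∫ (E_i ∂_j φ - E_j ∂_i φ)`. -/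
def curlD {n : ℕ} (Ω : Set (Fin n → ℝ)) (E : (Fin n → ℝ) → (Fin n → ℝ)) (i j : Fin n) :
    RawDistrib n :=
  fun φ => -∫ x in Ω, (E x i * pd j φ x - E x j * pd i φ x)

/-- The `i`-th component of the (row-wise) divergence of a matrix field,
as a distribution on `Ω`. -/
def divMatD {n : ℕ} (Ω : Set (Fin n → ℝ)) (P : (Fin n → ℝ) → Matrix (Fin n) (Fin n) ℝ)
    (i : Fin n) : RawDistrib n :=
  fun φ => -∫ x in Ω, ∑ j, P x i j * pd j φ x

/-- The `(i,j,k)` component of the (row-wise) curl of a matrix field,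
as a distribution on `Ω`. -/
def curlMatD {n : ℕ} (Ω : Set (Fin n → ℝ)) (M : (Fin n → ℝ) → Matrix (Fin n) (Fin n) ℝ)
    (i j k : Fin n) : RawDistrib n :=
  fun φ => -∫ x in Ω, (M x i j * pd k φ x - M x i k * pd j φ x)

/-- Squared `H¹(Ω)` norm of a (test) function. -/
def H1normSq {n : ℕ} (Ω : Set (Fin n → ℝ)) (φ : (Fin n → ℝ) → ℝ) : ℝ :=
  ∫ x in Ω, (φ x ^ 2 + ∑ j, pd j φ x ^ 2)

/-- The `H⁻¹(Ω)` distance between two distributions: the dual norm of their difference,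
i.e. the sup of `|T φ - S φ|` over test functions with `H¹` norm at most `1`. -/
def Hneg1Dist {n : ℕ} (Ω : Set (Fin n → ℝ)) (T S : RawDistrib n) : ℝ :=
  sSup {r | ∃ φ, IsTestFun Ω φ ∧ H1normSq Ω φ ≤ 1 ∧ r = |T φ - S φ|}

/-- The family `{T k}` is relatively compact in `H⁻¹(Ω)`: every subsequence has a
sub-subsequence converging strongly in the `H⁻¹(Ω)` distance to some distribution. -/
def RelCompactHneg1 {n : ℕ} (Ω : Set (Fin n → ℝ)) (T : ℕ → RawDistrib n) : Prop :=
  ∀ s : ℕ → ℕ, StrictMono s → ∃ t : ℕ → ℕ, StrictMono t ∧ ∃ L : RawDistrib n,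
    Tendsto (fun m => Hneg1Dist Ω (T (s (t m))) L) atTop (𝓝 0)

/-- The class `M(α,β;Ω)` of invertible matrix fields with `L^∞(Ω)` entries satisfying
`(Aξ,ξ) ≥ α|ξ|²` and `(A⁻¹ξ,ξ) ≥ β⁻¹|ξ|²` a.e. in `Ω`. -/
def MemMClass {n : ℕ} (α β : ℝ) (Ω : Set (Fin n → ℝ))
    (A : (Fin n → ℝ) → Matrix (Fin n) (Fin n) ℝ) : Prop :=
  (∀ i j, MemLp (fun x => A x i j) ⊤ (volume.restrict Ω)) ∧
    ∀ᵐ x ∂volume.restrict Ω, IsUnit (A x) ∧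
      (∀ ξ : Fin n → ℝ, α * ∑ i, ξ i ^ 2 ≤ ∑ i, (A x).mulVec ξ i * ξ i) ∧
      (∀ ξ : Fin n → ℝ, β⁻¹ * ∑ i, ξ i ^ 2 ≤ ∑ i, (A x)⁻¹.mulVec ξ i * ξ i)

/-- `H`-convergence of `Aε` to `A` (Murat–Tartar): whenever `Dε = Aε Eε`,
`Dε ⇀ D` and `Eε ⇀ E` weakly in `L²(Ω)ⁿ`, `{div Dε}` is relatively compact in `H⁻¹(Ω)`
and `{curl Eε}` is relatively compact in `H⁻¹(Ω)^{n×n}`, then `D = A E`. -/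
def HConverges {n : ℕ} (Ω : Set (Fin n → ℝ))
    (Aε : ℕ → (Fin n → ℝ) → Matrix (Fin n) (Fin n) ℝ)
    (A : (Fin n → ℝ) → Matrix (Fin n) (Fin n) ℝ) : Prop :=
  ∀ (Dε Eε : ℕ → (Fin n → ℝ) → (Fin n → ℝ)) (D E : (Fin n → ℝ) → (Fin n → ℝ)),
    (∀ k, ∀ᵐ x ∂volume.restrict Ω, Dε k x = (Aε k x).mulVec (Eε k x)) →
    WeakL2Vec Ω Dε D → WeakL2Vec Ω Eε E →
    RelCompactHneg1 Ω (fun k => divD Ω (Dε k)) →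
    (∀ i j, RelCompactHneg1 Ω (fun k => curlD Ω (Eε k) i j)) →
    ∀ᵐ x ∂volume.restrict Ω, D x = (A x).mulVec (E x)

/-- The entries of a matrix field are in `L²(Ω)`. -/
def MatEntriesL2 {n : ℕ} (Ω : Set (Fin n → ℝ))
    (M : (Fin n → ℝ) → Matrix (Fin n) (Fin n) ℝ) : Prop :=
  ∀ i j, MemLp (fun x => M x i j) 2 (volume.restrict Ω)

/-- A matrix field is invertible (a.e. on `Ω`). -/
def AEInvertible {n : ℕ} (Ω : Set (Fin n → ℝ))
    (M : (Fin n → ℝ) → Matrix (Fin n) (Fin n) ℝ) : Prop :=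
  ∀ᵐ x ∂volume.restrict Ω, IsUnit (M x)

/-- The matrix `M` of the quotient representation for stratified media:
`M₁₁ = 1/A₁₁`, `M₁ⱼ = 0` (`j ≥ 2`), `M_{i1} = -A_{i1}/A₁₁`, `M_{ij} = δ_{ij}` (`i,j ≥ 2`),
where the index `i0` plays the role of the first coordinate. -/
def stratM {n : ℕ} (A : Matrix (Fin n) (Fin n) ℝ) (i0 : Fin n) : Matrix (Fin n) (Fin n) ℝ :=
  Matrix.of fun i j =>
    if i = i0 then (if j = i0 then (A i0 i0)⁻¹ else 0)
    else if j = i0 then -(A i i0 / A i0 i0) else if i = j then 1 else 0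

/-- The matrix `P` of the quotient representation for stratified media:
`P₁₁ = 1`, `P_{1j} = A_{1j}/A₁₁` (`j ≥ 2`), `P_{i1} = 0`,
`P_{ij} = A_{ij} - A_{i1}A_{1j}/A₁₁` (`i,j ≥ 2`). -/
def stratP {n : ℕ} (A : Matrix (Fin n) (Fin n) ℝ) (i0 : Fin n) : Matrix (Fin n) (Fin n) ℝ :=
  Matrix.of fun i j =>
    if i = i0 then (if j = i0 then 1 else A i0 j / A i0 i0)
    else if j = i0 then 0 else A i j - A i i0 * A i0 j / A i0 i0

/-! ### Auxiliary lemmas for the proof -/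

section AuxLemmas

lemma pd_eq_zero_of_not_mem {n : ℕ} {φ : (Fin n → ℝ) → ℝ} {x : Fin n → ℝ}
    (hx : x ∉ tsupport φ) (l : Fin n) : pd l φ x = 0 := by
  have h : fderiv ℝ φ x = 0 := by
    by_contra h
    exact hx (support_fderiv_subset ℝ (Function.mem_support.2 h))
  simp [pd, h]

lemma continuous_pd {n : ℕ} {φ : (Fin n → ℝ) → ℝ} (hφ : ContDiff ℝ (⊤ : ℕ∞) φ) (l : Fin n) :
    Continuous (pd l φ) :=
  (hφ.continuous_fderiv (by simp)).clm_apply continuous_const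

lemma hasCompactSupport_pd {n : ℕ} {φ : (Fin n → ℝ) → ℝ} (hφ : HasCompactSupport φ)
    (l : Fin n) : HasCompactSupport (pd l φ) :=
  hφ.fderiv ℝ |>.comp_left (g := fun L : (Fin n → ℝ) →L[ℝ] ℝ => L (Pi.single l 1)) rfl

lemma integrable_mul_pd {n : ℕ} {Ω : Set (Fin n → ℝ)} (hΩo : IsOpen Ω)
    {g : (Fin n → ℝ) → ℝ} (hg : AEStronglyMeasurable g (volume.restrict Ω))
    {C : ℝ} (hC : 0 ≤ C) (hbd : ∀ᵐ x ∂volume.restrict Ω, |g x| ≤ C)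
    (l : Fin n) {φ : (Fin n → ℝ) → ℝ} (hφ : IsTestFun Ω φ) :
    Integrable (fun x => g x * pd l φ x) volume := by
  obtain ⟨hφs, hφc, hφt⟩ := hφ
  have hpdc := continuous_pd hφs l
  have hB : Integrable (fun x => C * ‖pd l φ x‖) volume := by
    apply Continuous.integrable_of_hasCompactSupport (continuous_const.mul hpdc.norm)
    exact ((hasCompactSupport_pd hφc l).norm).mul_left
  have hFm : AEStronglyMeasurable (fun x => g x * pd l φ x) volume := by
    have heq : (fun x => g x * pd l φ x) = Ω.indicator (fun x => g x * pd l φ x) := by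
      funext x
      by_cases hx : x ∈ Ω
      · rw [Set.indicator_of_mem hx]
      · rw [Set.indicator_of_notMem hx, pd_eq_zero_of_not_mem (fun h => hx (hφt h)) l,
          mul_zero]
    rw [heq]
    exact (aestronglyMeasurable_indicator_iff hΩo.measurableSet).2
      (hg.mul (hpdc.aestronglyMeasurable.restrict))
  refine hB.mono' hFm ?_
  have h' : ∀ᵐ x ∂(volume : Measure (Fin n → ℝ)), x ∈ Ω → |g x| ≤ C :=
    (ae_restrict_iff' hΩo.measurableSet).1 hbd
  filter_upwards [h'] with x hx
  by_cases hmem : x ∈ Ω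
  · rw [norm_mul]
    exact mul_le_mul_of_nonneg_right (by simpa using hx hmem) (norm_nonneg _)
  · rw [pd_eq_zero_of_not_mem (fun h => hmem (hφt h)) l]
    simpa using mul_nonneg hC (norm_nonneg (0 : ℝ))

/-- Insert coordinate `t` at position `l`. -/
def ins {m : ℕ} (l : Fin (m+1)) (t : ℝ) (y : Fin m → ℝ) : Fin (m+1) → ℝ :=
  Fin.insertNth l t y

lemma update_ins {m : ℕ} (l : Fin (m+1)) (s t : ℝ) (y : Fin m → ℝ) :
    Function.update (ins l s y) l t = ins l t y := by
  ext i
  rcases eq_or_ne i l with rfl | h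
  · simp [ins]
  · obtain ⟨j, rfl⟩ := Fin.exists_succAbove_eq h
    rw [Function.update_of_ne h]
    simp [ins]

lemma ins_eq_affine {m : ℕ} (l : Fin (m+1)) (y : Fin m → ℝ) :
    (fun t => ins l t y) = fun t => ins l 0 y + t • Pi.single l 1 := by
  funext t; ext i
  rcases eq_or_ne i l with rfl | h
  · simp [ins]
  · obtain ⟨j, rfl⟩ := Fin.exists_succAbove_eq h
    simp [ins, Pi.single_apply, (l.succAbove_ne j)]

/-- **Key lemma**: if `g` is bounded, measurable on `Ω`, and independent of the `l`-th
coordinate, then `∫_Ω g ∂_l φ = 0` for every test function `φ`. -/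
lemma key_integral_zero {m : ℕ} {Ω : Set (Fin (m+1) → ℝ)} (hΩo : IsOpen Ω)
    {g : (Fin (m+1) → ℝ) → ℝ} (hg : AEStronglyMeasurable g (volume.restrict Ω))
    {C : ℝ} (hC : 0 ≤ C) (hbd : ∀ᵐ x ∂volume.restrict Ω, |g x| ≤ C)
    (l : Fin (m+1)) (hind : ∀ (x : Fin (m+1) → ℝ) (t : ℝ), g (Function.update x l t) = g x)
    {φ : (Fin (m+1) → ℝ) → ℝ} (hφ : IsTestFun Ω φ) :
    ∫ x in Ω, g x * pd l φ x = 0 := by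
  have hFint := integrable_mul_pd hΩo hg hC hbd l hφ
  have hF0 : ∀ x ∉ Ω, g x * pd l φ x = 0 := fun x hx => by
    rw [pd_eq_zero_of_not_mem (fun h => hx (hφ.2.2 h)) l, mul_zero]
  rw [setIntegral_eq_integral_of_forall_compl_eq_zero hF0]
  set e := MeasurableEquiv.piFinSuccAbove (fun _ : Fin (m+1) => ℝ) l with he
  have hmp : MeasurePreserving e.symm volume volume :=
    (volume_preserving_piFinSuccAbove (fun _ : Fin (m+1) => ℝ) l).symm _
  rw [← hmp.integral_comp' (fun x => g x * pd l φ x)]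
  have hsymm : ∀ (t : ℝ) (y : Fin m → ℝ), e.symm (t, y) = ins l t y := by
    intro t y
    simp [he, MeasurableEquiv.piFinSuccAbove_symm_apply, Fin.insertNthEquiv, ins]
  have hGi : Integrable (fun z : ℝ × (Fin m → ℝ) => g (e.symm z) * pd l φ (e.symm z))
      ((volume : Measure ℝ).prod (volume : Measure (Fin m → ℝ))) := by
    rw [← Measure.volume_eq_prod]
    exact (hmp.integrable_comp_emb e.symm.measurableEmbedding).2 hFint
  rw [Measure.volume_eq_prod, MeasureTheory.integral_prod _ hGi,
    MeasureTheory.integral_integral_swap hGi]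
  have inner : ∀ y : Fin m → ℝ, (∫ t, g (e.symm (t, y)) * pd l φ (e.symm (t, y))) = 0 := by
    intro y
    have hψ : ∀ t : ℝ, HasDerivAt (fun t => φ (ins l t y)) (pd l φ (ins l t y)) t := by
      intro t
      have hc : HasDerivAt (fun t => ins l t y) (Pi.single l 1) t := by
        rw [ins_eq_affine l y]
        simpa using ((hasDerivAt_id t).smul_const
          (Pi.single l 1 : Fin (m+1) → ℝ)).const_add (ins l 0 y)
      exact ((hφ.1.differentiable (by simp) (ins l t y)).hasFDerivAt).comp_hasDerivAt t hc
    obtain ⟨r, hr⟩ := hφ.2.1.isBounded.subset_closedBall 0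
    have hb0 : (0:ℝ) < |r| + 1 := by positivity
    have h0 : ∀ t : ℝ, |r| + 1 ≤ |t| → φ (ins l t y) = 0 := by
      intro t ht
      by_contra hne
      have h1 : ins l t y ∈ tsupport φ := subset_tsupport _ (Function.mem_support.2 hne)
      have h2 := hr h1
      rw [Metric.mem_closedBall, dist_zero_right] at h2
      have h3 : |t| ≤ ‖ins l t y‖ := by simpa [ins] using norm_le_pi_norm (ins l t y) l
      have h4 : r ≤ |r| := le_abs_self r
      linarith
    have hder : ∀ t, deriv (fun t => φ (ins l t y)) t = pd l φ (ins l t y) :=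
      fun t => (hψ t).deriv
    have heq : (fun t => g (e.symm (t, y)) * pd l φ (e.symm (t, y)))
        = fun t => g (ins l 0 y) * deriv (fun t => φ (ins l t y)) t := by
      funext t
      rw [hsymm, hder]
      congr 1
      rw [← update_ins l 0 t y, hind]
    rw [heq, MeasureTheory.integral_const_mul]
    have hz : (∫ t, deriv (fun t => φ (ins l t y)) t) = 0 := by
      have hcontd : Continuous (deriv (fun t => φ (ins l t y))) := by
        rw [show deriv (fun t => φ (ins l t y)) = fun t => pd l φ (ins l t y) from funext hder]
        apply (continuous_pd hφ.1 l).comp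
        rw [ins_eq_affine l y]
        exact continuous_const.add (continuous_id.smul continuous_const)
      have hsupp : Function.support (deriv (fun t => φ (ins l t y)))
          ⊆ Set.Ioc (-(|r| + 2)) (|r| + 2) := by
        intro t ht
        have h1 : t ∈ tsupport (fun t => φ (ins l t y)) := support_deriv_subset ht
        have h2 : tsupport (fun t => φ (ins l t y)) ⊆ Set.Icc (-(|r|+1)) (|r|+1) := by
          apply closure_minimal ?_ isClosed_Icc
          intro s hs
          rw [Function.mem_support] at hs
          by_contra hsmem
          simp only [Set.mem_Icc, not_and_or, not_le] at hsmem
          refine hs (h0 s ?_)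
          rcases hsmem with h | h
          · exact le_abs.2 (Or.inr (by linarith))
          · exact le_abs.2 (Or.inl h.le)
        have h3 := h2 h1
        simp only [Set.mem_Icc] at h3
        exact ⟨by linarith [h3.1], by linarith [h3.2]⟩
      rw [← intervalIntegral.integral_eq_integral_of_support_subset hsupp,
        intervalIntegral.integral_deriv_eq_sub (fun x _ => (hψ x).differentiableAt)
          (hcontd.intervalIntegrable _ _)]
      have hb1 : φ (ins l (|r| + 2) y) = 0 :=
        h0 (|r| + 2) ((by linarith : |r| + 1 ≤ |r| + 2).trans (le_abs_self _))
      have hb2 : φ (ins l (-(|r| + 2)) y) = 0 := by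
        refine h0 (-(|r| + 2)) ?_
        rw [abs_neg]
        exact (by linarith : |r| + 1 ≤ |r| + 2).trans (le_abs_self _)
      beta_reduce
      rw [hb1, hb2]
      ring
    rw [hz, mul_zero]
  rw [show (fun y : Fin m → ℝ => ∫ t, g (e.symm (t, y)) * pd l φ (e.symm (t, y)))
    = fun _ => (0:ℝ) from funext inner]
  exact integral_zero _ _

end AuxLemmas

section MatrixLemmas

lemma sum_mul_single {n : ℕ} (f : Fin n → ℝ) (j : Fin n) :
    (∑ i, f i * (Pi.single j 1 : Fin n → ℝ) i) = f j := by
  have h : ∀ i, f i * (Pi.single j 1 : Fin n → ℝ) i = if i = j then f i else 0 := fun i => by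
    rcases eq_or_ne i j with rfl | h <;> simp [*]
  rw [Finset.sum_congr rfl fun i _ => h i, Finset.sum_ite_eq']
  simp

lemma sum_single_mul {n : ℕ} (f : Fin n → ℝ) (j : Fin n) :
    (∑ i, (Pi.single j 1 : Fin n → ℝ) i * f i) = f j := by
  have h : ∀ i, (Pi.single j 1 : Fin n → ℝ) i * f i = if i = j then f i else 0 := fun i => by
    rcases eq_or_ne i j with rfl | h <;> simp [*]
  rw [Finset.sum_congr rfl fun i _ => h i, Finset.sum_ite_eq']
  simp

lemma sum_single_sq {n : ℕ} (j : Fin n) : (∑ i, ((Pi.single j 1 : Fin n → ℝ)) i ^ 2) = 1 := by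
  have h : ∀ i, ((Pi.single j 1 : Fin n → ℝ) i) ^ 2 = if i = j then 1 else 0 := fun i => by
    rcases eq_or_ne i j with rfl | h <;> simp [*]
  rw [Finset.sum_congr rfl fun i _ => h i, Finset.sum_ite_eq']
  simp

lemma mulVec_single_apply {n : ℕ} (N : Matrix (Fin n) (Fin n) ℝ) (j i : Fin n) :
    N.mulVec (Pi.single j 1) i = N i j := by
  rw [Matrix.mulVec, dotProduct]
  exact sum_mul_single (fun k => N i k) j

/-- Pointwise bounds coming from the two coercivity inequalities. -/
lemma matrix_bounds {n : ℕ} [NeZero n] (M : Matrix (Fin n) (Fin n) ℝ) {α β : ℝ}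
    (hα : 0 < α) (hβ : 0 < β) (hu : IsUnit M)
    (h1 : ∀ ξ : Fin n → ℝ, α * ∑ i, ξ i ^ 2 ≤ ∑ i, M.mulVec ξ i * ξ i)
    (h2 : ∀ ξ : Fin n → ℝ, β⁻¹ * ∑ i, ξ i ^ 2 ≤ ∑ i, M⁻¹.mulVec ξ i * ξ i) :
    α ≤ M 0 0 ∧ ∀ i j, |M i j| ≤ β := by
  constructor
  · have h := h1 (Pi.single 0 1)
    rw [sum_single_sq, sum_mul_single (fun i => M.mulVec (Pi.single 0 1) i) 0,
      mulVec_single_apply] at h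
    linarith
  · intro i j
    set ξ := M.mulVec (Pi.single j 1) with hξ
    have hinv : M⁻¹.mulVec ξ = Pi.single j 1 := by
      rw [hξ, Matrix.mulVec_mulVec, Matrix.nonsing_inv_mul M ((Matrix.isUnit_iff_isUnit_det M).1 hu),
        Matrix.one_mulVec]
    have h := h2 ξ
    rw [hinv, sum_single_mul (fun i => ξ i) j] at h
    have hS' : (∑ k, ξ k ^ 2) ≤ β * ξ j := by
      have h' := mul_le_mul_of_nonneg_left h hβ.le
      rwa [← mul_assoc, mul_inv_cancel₀ hβ.ne', one_mul] at h'
    have hSi : ξ i ^ 2 ≤ ∑ k, ξ k ^ 2 :=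
      Finset.single_le_sum (fun k _ => sq_nonneg (ξ k)) (Finset.mem_univ i)
    have hSj : ξ j ^ 2 ≤ ∑ k, ξ k ^ 2 :=
      Finset.single_le_sum (fun k _ => sq_nonneg (ξ k)) (Finset.mem_univ j)
    have hSnn : (0:ℝ) ≤ ∑ k, ξ k ^ 2 := Finset.sum_nonneg fun k _ => sq_nonneg (ξ k)
    have hMij : M i j = ξ i := (mulVec_single_apply M j i).symm
    have hjle : ξ j ≤ β := by nlinarith
    have hsq : ξ i ^ 2 ≤ β ^ 2 := by nlinarith
    rw [hMij, abs_le]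
    constructor <;> nlinarith

/-- Explicit inverse of `stratM`. -/
def stratN {n : ℕ} [NeZero n] (M : Matrix (Fin n) (Fin n) ℝ) : Matrix (Fin n) (Fin n) ℝ :=
  Matrix.of fun i j =>
    if i = 0 then (if j = 0 then M 0 0 else 0)
    else if j = 0 then M i 0 else if i = j then 1 else 0

lemma stratM_mul_stratN {n : ℕ} [NeZero n] (M : Matrix (Fin n) (Fin n) ℝ)
    (h : M 0 0 ≠ 0) : stratM M 0 * stratN M = 1 := by
  ext i j
  rw [Matrix.mul_apply]
  rcases eq_or_ne i 0 with rfl | hi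
  · rw [Finset.sum_congr rfl (fun k _ => show stratM M 0 0 k * stratN M k j
        = if k = 0 then (M 0 0)⁻¹ * stratN M 0 j else 0 by
      rcases eq_or_ne k 0 with rfl | hk
      · simp [stratM]
      · simp [stratM, hk]),
      Finset.sum_ite_eq' Finset.univ (0 : Fin n) (fun _ => (M 0 0)⁻¹ * stratN M 0 j)]
    rcases eq_or_ne j 0 with rfl | hj
    · simp [stratN, Matrix.one_apply, inv_mul_cancel₀ h]
    · simp [stratN, Matrix.one_apply, hj, Ne.symm hj]
  · rw [Finset.sum_congr rfl (fun k _ => show stratM M 0 i k * stratN M k j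
        = (if k = 0 then -(M i 0 / M 0 0) * stratN M 0 j else 0)
          + (if k = i then stratN M i j else 0) by
      rcases eq_or_ne k 0 with rfl | hk
      · simp [stratM, hi, Ne.symm hi]
      · rcases eq_or_ne k i with rfl | hk2
        · simp [stratM, hi, hk]
        · simp [stratM, hi, hk, hk2, Ne.symm hk2]),
      Finset.sum_add_distrib,
      Finset.sum_ite_eq' Finset.univ (0 : Fin n) (fun _ => -(M i 0 / M 0 0) * stratN M 0 j),
      Finset.sum_ite_eq' Finset.univ i (fun _ => stratN M i j)]
    rcases eq_or_ne j 0 with rfl | hj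
    · rw [Matrix.one_apply_ne hi]
      simp only [Finset.mem_univ, if_true]
      have e1 : stratN M (0 : Fin n) (0 : Fin n) = M 0 0 := by simp [stratN]
      have e2 : stratN M i (0 : Fin n) = M i 0 := by simp [stratN, hi]
      rw [e1, e2]
      field_simp
      ring
    · simp only [Finset.mem_univ, if_true]
      have e1 : stratN M (0 : Fin n) j = 0 := by simp [stratN, hj]
      have e2 : stratN M i j = if i = j then 1 else 0 := by simp [stratN, hi, hj]
      rw [e1, e2, mul_zero, zero_add, Matrix.one_apply]

lemma isUnit_stratM {n : ℕ} [NeZero n] (M : Matrix (Fin n) (Fin n) ℝ)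
    (h : M 0 0 ≠ 0) : IsUnit (stratM M 0) :=
  ⟨⟨stratM M 0, stratN M, stratM_mul_stratN M h,
    mul_eq_one_comm.1 (stratM_mul_stratN M h)⟩, rfl⟩

lemma stratM_mul_eq_stratP {n : ℕ} [NeZero n] (M : Matrix (Fin n) (Fin n) ℝ)
    (h : M 0 0 ≠ 0) : stratM M 0 * M = stratP M 0 := by
  ext i j
  rw [Matrix.mul_apply]
  rcases eq_or_ne i 0 with rfl | hi
  · rw [Finset.sum_congr rfl (fun k _ => show stratM M 0 0 k * M k j
        = if k = 0 then (M 0 0)⁻¹ * M 0 j else 0 by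
      rcases eq_or_ne k 0 with rfl | hk
      · simp [stratM]
      · simp [stratM, hk]),
      Finset.sum_ite_eq' Finset.univ (0 : Fin n) (fun _ => (M 0 0)⁻¹ * M 0 j)]
    rcases eq_or_ne j 0 with rfl | hj
    · simp [stratP, inv_mul_cancel₀ h]
    · simp [stratP, hj, inv_mul_eq_div]
  · rw [Finset.sum_congr rfl (fun k _ => show stratM M 0 i k * M k j
        = (if k = 0 then -(M i 0 / M 0 0) * M 0 j else 0) + (if k = i then M i j else 0) by
      rcases eq_or_ne k 0 with rfl | hk
      · simp [stratM, hi, Ne.symm hi]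
      · rcases eq_or_ne k i with rfl | hk2
        · simp [stratM, hi, hk]
        · simp [stratM, hi, hk, hk2, Ne.symm hk2]),
      Finset.sum_add_distrib,
      Finset.sum_ite_eq' Finset.univ (0 : Fin n) (fun _ => -(M i 0 / M 0 0) * M 0 j),
      Finset.sum_ite_eq' Finset.univ i (fun _ => M i j)]
    rcases eq_or_ne j 0 with rfl | hj
    · simp only [Finset.mem_univ, if_true]
      have e1 : stratP M (0 : Fin n) i (0 : Fin n) = 0 := by simp [stratP, hi]
      rw [e1]
      field_simp
      ring
    · simp only [Finset.mem_univ, if_true]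
      have e1 : stratP M (0 : Fin n) i j = M i j - M i 0 * M 0 j / M 0 0 := by
        simp [stratP, hi, hj]
      rw [e1]
      ring

lemma stratM_entry_bound {n : ℕ} [NeZero n] {M : Matrix (Fin n) (Fin n) ℝ} {α β : ℝ}
    (hα : 0 < α) (hβ : 0 < β) (h00 : α ≤ M 0 0) (hb : ∀ i j, |M i j| ≤ β) (i j : Fin n) :
    |stratM M 0 i j| ≤ α⁻¹ + β / α + 1 := by
  have hM0 : (0:ℝ) < M 0 0 := lt_of_lt_of_le hα h00
  have hinv : (0:ℝ) ≤ α⁻¹ := by positivity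
  have hdiv : (0:ℝ) ≤ β / α := by positivity
  rcases eq_or_ne i 0 with rfl | hi
  · rcases eq_or_ne j 0 with rfl | hj
    · have hv : stratM M 0 (0 : Fin n) (0 : Fin n) = (M 0 0)⁻¹ := by simp [stratM]
      rw [hv, abs_of_nonneg (by positivity)]
      have h2 := one_div_le_one_div_of_le hα h00
      rw [one_div, one_div] at h2
      linarith
    · have hv : stratM M 0 (0 : Fin n) j = 0 := by simp [stratM, hj]
      rw [hv, abs_zero]; linarith
  · rcases eq_or_ne j 0 with rfl | hj
    · have hv : stratM M 0 i (0 : Fin n) = -(M i 0 / M 0 0) := by simp [stratM, hi]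
      rw [hv, abs_neg, abs_div]
      have h2 : |M i 0| / |M 0 0| ≤ β / α :=
        div_le_div₀ hβ.le (hb i 0) hα (by rw [abs_of_pos hM0]; exact h00)
      linarith
    · rcases eq_or_ne i j with rfl | hij
      · have hv : stratM M 0 i i = 1 := by simp [stratM, hi]
        rw [hv, abs_one]; linarith
      · have hv : stratM M 0 i j = 0 := by simp [stratM, hi, hj, hij]
        rw [hv, abs_zero]; linarith

lemma stratP_entry_bound {n : ℕ} [NeZero n] {M : Matrix (Fin n) (Fin n) ℝ} {α β : ℝ}
    (hα : 0 < α) (hβ : 0 < β) (h00 : α ≤ M 0 0) (hb : ∀ i j, |M i j| ≤ β) (i j : Fin n) :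
    |stratP M 0 i j| ≤ 1 + β / α + β + β * β / α := by
  have hM0 : (0:ℝ) < M 0 0 := lt_of_lt_of_le hα h00
  have hβ' : (0:ℝ) ≤ β := hβ.le
  have hdiv : (0:ℝ) ≤ β / α := by positivity
  have hdiv2 : (0:ℝ) ≤ β * β / α := by positivity
  have habs : α ≤ |M 0 0| := by rw [abs_of_pos hM0]; exact h00
  rcases eq_or_ne i 0 with rfl | hi
  · rcases eq_or_ne j 0 with rfl | hj
    · have hv : stratP M 0 (0 : Fin n) (0 : Fin n) = 1 := by simp [stratP]
      rw [hv, abs_one]; linarith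
    · have hv : stratP M 0 (0 : Fin n) j = M 0 j / M 0 0 := by simp [stratP, hj]
      rw [hv, abs_div]
      have h2 : |M 0 j| / |M 0 0| ≤ β / α := div_le_div₀ hβ.le (hb 0 j) hα habs
      linarith
  · rcases eq_or_ne j 0 with rfl | hj
    · have hv : stratP M 0 i (0 : Fin n) = 0 := by simp [stratP, hi]
      rw [hv, abs_zero]; linarith
    · have hv : stratP M 0 i j = M i j - M i 0 * M 0 j / M 0 0 := by simp [stratP, hi, hj]
      rw [hv]
      have h2 : |M i j - M i 0 * M 0 j / M 0 0| ≤ |M i j| + |M i 0 * M 0 j / M 0 0| :=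
        abs_sub _ _
      have h3 : |M i 0 * M 0 j / M 0 0| ≤ β * β / α := by
        rw [abs_div, abs_mul]
        exact div_le_div₀ (by positivity) (mul_le_mul (hb i 0) (hb 0 j) (abs_nonneg _) hβ.le)
          hα habs
      have h4 := hb i j
      linarith

end MatrixLemmas

/-- **Explicit quotient representation for stratified media.** If `A ∈ M(α,β;Ω)` depends
only on the first coordinate, then the explicit matrices `M = stratM (A x) 0` and
`P = stratP (A x) 0` have `L^∞` entries, `M` is invertible a.e., `M A = P`,
`curl M = 0` and `div P = 0` as distributions on `Ω`. -/
theorem stratified_quotient_representation {n : ℕ} [NeZero n] (Ω : Set (Fin n → ℝ))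
    (hΩo : IsOpen Ω) (hΩc : IsConnected Ω) (hΩb : Bornology.IsBounded Ω)
    (α β : ℝ) (hα : 0 < α) (hαβ : α ≤ β)
    (A : (Fin n → ℝ) → Matrix (Fin n) (Fin n) ℝ) (hA : MemMClass α β Ω A)
    (hstrat : ∀ x y : Fin n → ℝ, x 0 = y 0 → A x = A y) :
    (∃ C : ℝ, ∀ i j, ∀ᵐ x ∂volume.restrict Ω, |stratM (A x) 0 i j| ≤ C) ∧
    AEInvertible Ω (fun x => stratM (A x) 0) ∧
    (∀ᵐ x ∂volume.restrict Ω, stratM (A x) 0 * A x = stratP (A x) 0) ∧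
    (∀ i j l, ∀ φ : (Fin n → ℝ) → ℝ, IsTestFun Ω φ →
      curlMatD Ω (fun x => stratM (A x) 0) i j l φ = 0) ∧
    (∀ i, ∀ φ : (Fin n → ℝ) → ℝ, IsTestFun Ω φ →
      divMatD Ω (fun x => stratP (A x) 0) i φ = 0) := by
  obtain ⟨m, rfl⟩ : ∃ m, n = m + 1 :=
    ⟨n - 1, (Nat.succ_pred_eq_of_pos (Nat.pos_of_ne_zero (NeZero.ne n))).symm⟩
  have hβ : (0:ℝ) < β := lt_of_lt_of_le hα hαβ
  have hAmeas : ∀ i j, AEMeasurable (fun x => A x i j) (volume.restrict Ω) := fun i j =>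
    ((hA.1 i j).aestronglyMeasurable).aemeasurable
  have hae : ∀ᵐ x ∂volume.restrict Ω,
      α ≤ A x 0 0 ∧ (∀ i j, |A x i j| ≤ β) ∧ A x 0 0 ≠ 0 := by
    filter_upwards [hA.2] with x hx
    obtain ⟨hu, h1, h2⟩ := hx
    obtain ⟨ha, hb⟩ := matrix_bounds (A x) hα hβ hu h1 h2
    exact ⟨ha, hb, (lt_of_lt_of_le hα ha).ne'⟩
  -- measurability of the entries of `stratM`
  have hMmeas : ∀ i j, AEStronglyMeasurable (fun x => stratM (A x) 0 i j)
      (volume.restrict Ω) := by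
    intro i j
    rw [aestronglyMeasurable_iff_aemeasurable]
    rcases eq_or_ne i 0 with rfl | hi
    · rcases eq_or_ne j 0 with rfl | hj
      · simp only [stratM, Matrix.of_apply, if_pos rfl]
        exact (hAmeas 0 0).inv
      · simp only [stratM, Matrix.of_apply, if_pos rfl, if_neg hj]
        exact aemeasurable_const
    · rcases eq_or_ne j 0 with rfl | hj
      · simp only [stratM, Matrix.of_apply, if_neg hi, if_pos rfl]
        exact ((hAmeas i 0).div (hAmeas 0 0)).neg
      · simp only [stratM, Matrix.of_apply, if_neg hi, if_neg hj]
        exact aemeasurable_const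
  have hPmeas : ∀ i j, AEStronglyMeasurable (fun x => stratP (A x) 0 i j)
      (volume.restrict Ω) := by
    intro i j
    rw [aestronglyMeasurable_iff_aemeasurable]
    rcases eq_or_ne i 0 with rfl | hi
    · rcases eq_or_ne j 0 with rfl | hj
      · simp only [stratP, Matrix.of_apply, if_pos rfl]
        exact aemeasurable_const
      · simp only [stratP, Matrix.of_apply, if_pos rfl, if_neg hj]
        exact (hAmeas 0 j).div (hAmeas 0 0)
    · rcases eq_or_ne j 0 with rfl | hj
      · simp only [stratP, Matrix.of_apply, if_neg hi, if_pos rfl]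
        exact aemeasurable_const
      · simp only [stratP, Matrix.of_apply, if_neg hi, if_neg hj]
        exact (hAmeas i j).sub (((hAmeas i 0).mul (hAmeas 0 j)).div (hAmeas 0 0))
  -- boundedness of the entries
  have hC1 : (0:ℝ) ≤ α⁻¹ + β / α + 1 := by positivity
  have hC2 : (0:ℝ) ≤ 1 + β / α + β + β * β / α := by positivity
  have hMbd : ∀ i j, ∀ᵐ x ∂volume.restrict Ω, |stratM (A x) 0 i j| ≤ α⁻¹ + β / α + 1 :=
    fun i j => hae.mono fun x hx => stratM_entry_bound hα hβ hx.1 hx.2.1 i j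
  have hPbd : ∀ i j, ∀ᵐ x ∂volume.restrict Ω,
      |stratP (A x) 0 i j| ≤ 1 + β / α + β + β * β / α :=
    fun i j => hae.mono fun x hx => stratP_entry_bound hα hβ hx.1 hx.2.1 i j
  -- independence of the entries from suitable coordinates
  have hindM : ∀ (i j l : Fin (m+1)), (l = 0 → j ≠ 0) →
      ∀ (x : Fin (m+1) → ℝ) (t : ℝ),
        stratM (A (Function.update x l t)) 0 i j = stratM (A x) 0 i j := by
    intro i j l hc x t
    rcases eq_or_ne l 0 with rfl | hl
    · have hj := hc rfl
      simp [stratM, hj]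
    · rw [hstrat (Function.update x l t) x (Function.update_of_ne (Ne.symm hl) _ _)]
  have hindP : ∀ (i j l : Fin (m+1)), (l = 0 → j = 0) →
      ∀ (x : Fin (m+1) → ℝ) (t : ℝ),
        stratP (A (Function.update x l t)) 0 i j = stratP (A x) 0 i j := by
    intro i j l hc x t
    rcases eq_or_ne l 0 with rfl | hl
    · have hj := hc rfl
      subst hj
      simp [stratP]
    · rw [hstrat (Function.update x l t) x (Function.update_of_ne (Ne.symm hl) _ _)]
  refine ⟨⟨α⁻¹ + β / α + 1, hMbd⟩, ?_, ?_, ?_, ?_⟩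
  · exact hae.mono fun x hx => isUnit_stratM (A x) hx.2.2
  · exact hae.mono fun x hx => stratM_mul_eq_stratP (A x) hx.2.2
  · -- curl M = 0
    intro i j l φ hφ
    rcases eq_or_ne j l with rfl | hjl
    · simp [curlMatD]
    · have hia : Integrable (fun x => stratM (A x) 0 i j * pd l φ x) (volume.restrict Ω) :=
        (integrable_mul_pd hΩo (hMmeas i j) hC1 (hMbd i j) l hφ).restrict
      have hib : Integrable (fun x => stratM (A x) 0 i l * pd j φ x) (volume.restrict Ω) :=
        (integrable_mul_pd hΩo (hMmeas i l) hC1 (hMbd i l) j hφ).restrict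
      have h1 : (∫ x in Ω, stratM (A x) 0 i j * pd l φ x) = 0 :=
        key_integral_zero hΩo (hMmeas i j) hC1 (hMbd i j) l
          (hindM i j l (fun hl0 => fun hj0 => hjl (hj0.trans hl0.symm))) hφ
      have h2 : (∫ x in Ω, stratM (A x) 0 i l * pd j φ x) = 0 :=
        key_integral_zero hΩo (hMmeas i l) hC1 (hMbd i l) j
          (hindM i l j (fun hj0 => fun hl0 => hjl (hj0.trans hl0.symm))) hφ
      unfold curlMatD
      rw [integral_sub hia hib, h1, h2]
      simp
  · -- div P = 0
    intro i φ hφ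
    unfold divMatD
    rw [MeasureTheory.integral_finset_sum _ (fun j _ =>
      (integrable_mul_pd hΩo (hPmeas i j) hC2 (hPbd i j) j hφ).restrict)]
    have h0 : ∀ j : Fin (m+1), (∫ x in Ω, stratP (A x) 0 i j * pd j φ x) = 0 := fun j =>
      key_integral_zero hΩo (hPmeas i j) hC2 (hPbd i j) j (hindP i j j (fun h => h)) hφ
    simp [h0]
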